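/- arXiv:0911.4351 — 2 statements merged into one kernel-verified Lean document; each statement's English description precedes it below -/
import Mathlib

section
/- There exists an integer d₀ > 0 such that for every integer d₀ ≤ d ≤ 2n−1, if G is a d-regular graph on 2n vertices, then there exists a subset U of n+1 vertices such that the induced subgraph G[U] has maximum degree at most d/2 + 2√(d·ln d) + 2. -/
open SimpleGraph Real
open scoped Classical

variable {V : Type*}

noncomputable def degN (H : SimpleGraph V) (v : V) : ℕ := (H.neighborSet v).ncard

noncomputable def maxDeg (H : SimpleGraph V) : ℕ := sSup (Set.range (degN H))

noncomputable def minDeg (H : SimpleGraph V) : ℕ := sInf (Set.range (degN H))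

noncomputable def localResilience [Fintype V] (G : SimpleGraph V)
    (P : SimpleGraph V → Prop) : ℕ :=
  sInf {r | ∃ H ≤ G, maxDeg H = r ∧ ¬ P (G \ H)}

def EdgeConnK [Fintype V] (G : SimpleGraph V) (k : ℕ) : Prop :=
  ∀ s : Finset (Sym2 V), s.card < k → (G.deleteEdges ↑s).Connected

def VertConnK [Fintype V] (G : SimpleGraph V) (k : ℕ) : Prop :=
  ∀ S : Finset V, S.card < k → (G.induce ((↑S : Set V)ᶜ)).Connected

def IsReg (G : SimpleGraph V) (d : ℕ) : Prop := ∀ v, degN G v = d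

noncomputable def quadForm [Fintype V] (G : SimpleGraph V) (x : V → ℝ) : ℝ :=
  ∑ u, ∑ v, if G.Adj u v then x u * x v else 0

/-- `(n,d,lam)`-graph: `d`-regular and all eigenvalues of the adjacency matrix other
than the top one (i.e. on the orthogonal complement of the all-ones vector) are at
most `lam` in absolute value. -/
def IsNDL [Fintype V] (G : SimpleGraph V) (d : ℕ) (lam : ℝ) : Prop :=
  IsReg G d ∧ ∀ x : V → ℝ, (∑ v, x v) = 0 → |quadForm G x| ≤ lam * ∑ v, (x v) ^ 2

noncomputable def edgesWithin (G : SimpleGraph V) (U : Set V) : ℕ :=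
  {e ∈ G.edgeSet | ∀ v ∈ e, v ∈ U}.ncard

noncomputable def edgesBetween (G : SimpleGraph V) (U W : Set V) : ℕ :=
  {p : V × V | p.1 ∈ U ∧ p.2 ∈ W ∧ G.Adj p.1 p.2}.ncard

def nbhd (G : SimpleGraph V) (S : Set V) : Set V :=
  {v | v ∉ S ∧ ∃ u ∈ S, G.Adj u v}

noncomputable def maxPathLength (G : SimpleGraph V) : ℕ :=
  sSup {n | ∃ (u v : V) (p : G.Walk u v), p.IsPath ∧ p.length = n}

def Booster [Fintype V] (G : SimpleGraph V) (u v : V) : Prop :=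
  u ≠ v ∧ ¬ G.Adj u v ∧
    ((G ⊔ fromEdgeSet {s(u, v)}).IsHamiltonian ∨
      maxPathLength G < maxPathLength (G ⊔ fromEdgeSet {s(u, v)}))

def BSet [Fintype V] (G : SimpleGraph V) (v : V) : Set V := {w | Booster G v w}

def boosterSet [Fintype V] (G : SimpleGraph V) : Set (Sym2 V) :=
  {e | ∃ u v, e = s(u, v) ∧ Booster G u v}

def IsExpander [Fintype V] (G : SimpleGraph V) (ε : ℝ) : Prop :=
  (∀ S : Set V, (S.ncard : ℝ) < ε * (Fintype.card V) →
      10 * S.ncard ≤ (nbhd G S).ncard) ∧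
  (∀ S : Set V, ε * (Fintype.card V) ≤ (S.ncard : ℝ) →
      (S.ncard : ℝ) ≤ 2 * ε * (Fintype.card V) →
      (1 + 12 * ε) * (Fintype.card V) / 2 ≤ ((nbhd G S).ncard : ℝ))

def IsMagnifier (G : SimpleGraph V) (k ℓ : ℝ) : Prop :=
  ∀ U : Set V, (U.ncard : ℝ) ≤ k → ℓ * U.ncard ≤ ((nbhd G U).ncard : ℝ)

def QuasiRandom [Fintype V] (G : SimpleGraph V) (d : ℕ) (ε : ℝ) : Prop :=
  ((d : ℝ) / 2 ≤ (minDeg G : ℝ) ∧ (maxDeg G : ℝ) ≤ 2 * d) ∧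
  (∀ U : Set V, (U.ncard : ℝ) < ε ^ 3 * (Fintype.card V) / 14 →
      (edgesWithin G U : ℝ) ≤ ε ^ 3 * d * U.ncard / 14) ∧
  (∀ U W : Set V, Disjoint U W →
      ε ^ 3 / 160 * (Fintype.card V) ≤ (U.ncard : ℝ) →
      (U.ncard : ℝ) < 2 * (ε ^ 3 / 160) * (Fintype.card V) →
      (Fintype.card V : ℝ) / 2 * (1 - ε / 2 - 4 * (ε ^ 3 / 160)) ≤ (W.ncard : ℝ) →
      (d : ℝ) * (1 - ε / 4) / (Fintype.card V) * (U.ncard * W.ncard)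
          - (1 - ε) * (d : ℝ) / 2 * U.ncard ≤ (edgesBetween G U W : ℝ))

def bipartiteBetween (G : SimpleGraph V) (S : Set V) : SimpleGraph V where
  Adj u v := G.Adj u v ∧ ((u ∈ S ∧ v ∉ S) ∨ (u ∉ S ∧ v ∈ S))
  symm := by
    constructor
    intro u v h
    exact ⟨h.1.symm, h.2.elim (fun hh => Or.inr ⟨hh.2, hh.1⟩) (fun hh => Or.inl ⟨hh.2, hh.1⟩)⟩
  loopless := by
    constructor
    intro v h
    exact G.loopless.irrefl v h.1

def LegalStrategy [Fintype V] (G : SimpleGraph V)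
    (σ : Finset (Sym2 V) × Finset (Sym2 V) → Sym2 V) : Prop :=
  ∀ s : Finset (Sym2 V) × Finset (Sym2 V),
    (∃ e ∈ G.edgeSet, e ∉ s.1 ∧ e ∉ s.2) →
    σ s ∈ G.edgeSet ∧ σ s ∉ s.1 ∧ σ s ∉ s.2

def playMB [DecidableEq V]
    (σ τ : Finset (Sym2 V) × Finset (Sym2 V) → Sym2 V) :
    ℕ → Finset (Sym2 V) × Finset (Sym2 V)
  | 0 => (∅, ∅)
  | n + 1 =>
      let p := playMB σ τ n
      let q : Finset (Sym2 V) × Finset (Sym2 V) := (p.1, insert (τ p) p.2)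
      (insert (σ q) q.1, q.2)


/-!
Pair up the `2n` vertices by an equivalence `e : V ≃ Fin n × Bool` and let `σ : Fin n → Bool`
choose, in every pair, which vertex goes to the side `A`. A pair inside the neighbourhood of `v`
gives `v` exactly one neighbour on its own side whatever `σ` is, so twice the number of
neighbours of `v` on its own side minus `d` is, up to sign, a Rademacher sum `∑ i, a i * ε (σ i)`
with `a i = ±1` when `v` is adjacent to exactly one vertex of the `i`-th pair and `a i = 0`
otherwise; in particular `∑ i, a i ^ 2 ≤ d`. By Hoeffding's inequality it exceeds
`4 √(d log d)` in absolute value with probability at most `2 d⁻⁸`. This bad event only depends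
on the pairs meeting the neighbourhood of `v`, so it shares variables with at most `2 d²` bad
events, and the Lovász Local Lemma (`4 p D ≤ 1`) gives a `σ` avoiding all of them. Every vertex
then has `d/2 ± 2 √(d log d)` neighbours on its own side, and `A` together with any vertex `w`
of the other side works: a vertex of `A` gains at most the neighbour `w`, and `w` has at most
`d/2 + 2 √(d log d)` neighbours in `A`.
-/

open Finset MeasureTheory ProbabilityTheory
open scoped NNReal

lemma ProbabilityTheory.HasSubgaussianMGF.mono {Ω : Type*} {m : MeasurableSpace Ω}
    {μ : Measure Ω} {X : Ω → ℝ} {c c' : ℝ≥0} (h : HasSubgaussianMGF X c μ) (hc : c ≤ c') :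
    HasSubgaussianMGF X c' μ :=
  ⟨h.integrable_exp_mul, fun t => (h.mgf_le t).trans <| exp_le_exp.2 <| by gcongr⟩

def rademacher (b : Bool) : ℝ := if b then 1 else -1

lemma rademacher_mul_rademacher (a b : Bool) :
    rademacher a * rademacher b = if a = b then 1 else -1 := by
  cases a <;> cases b <;> norm_num [rademacher]

lemma rademacher_not (a : Bool) : rademacher (!a) = -rademacher a := by
  cases a <;> norm_num [rademacher]

lemma abs_rademacher (a : Bool) : |rademacher a| = 1 := by
  cases a <;> norm_num [rademacher]

lemma hasSubgaussianMGF_rademacher : HasSubgaussianMGF rademacher 1 (uniformOn Set.univ) := by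
  convert hasSubgaussianMGF_of_mem_Icc_of_integral_eq_zero (a := -1) (b := 1)
    (μ := uniformOn Set.univ) (measurable_of_countable rademacher).aemeasurable
    (ae_of_all _ fun b => by cases b <;> norm_num [rademacher])
    (by simp only [integral_fintype .of_finite, Fintype.sum_bool, measureReal_def, uniformOn_univ]
        norm_num [rademacher]) using 1
  norm_num [← NNReal.coe_inj]

section BooleanCube

variable {ι : Type*}

lemma preimage_image_restrict_of_dependsOn {A : Finset (ι → Bool)} {I : Finset ι}
    (hA : DependsOn (· ∈ A) (I : Set ι)) :
    (fun (σ : ι → Bool) (i : I) => σ i) ⁻¹' ((fun (σ : ι → Bool) (i : I) => σ i) '' A) = A := by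
  refine subset_antisymm (fun τ ⟨σ, hσ, heq⟩ => ?_) (Set.subset_preimage_image _ _)
  have := hA (x := σ) (y := τ) fun i hi => congrFun heq ⟨i, hi⟩
  simp_all

variable [Fintype ι]

lemma uniformOn_univ_eq_pi :
    uniformOn (Set.univ : Set (ι → Bool)) = Measure.pi fun _ => uniformOn Set.univ := by
  rw [← Set.pi_univ, uniformOn_pi]

lemma measureReal_uniformOn_univ (s : Finset (ι → Bool)) :
    (uniformOn Set.univ).real (s : Set (ι → Bool)) = #s / 2 ^ Fintype.card ι := by
  simp [measureReal_def, uniformOn_univ, ENNReal.toReal_div, Fintype.card_pi]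

lemma iIndepFun_eval : iIndepFun (fun i (σ : ι → Bool) => σ i) (uniformOn Set.univ) := by
  rw [uniformOn_univ_eq_pi]
  exact iIndepFun_pi (X := fun _ => id) fun _ => aemeasurable_id

lemma card_inter_mul_eq_of_dependsOn {A C : Finset (ι → Bool)} {I J : Finset ι}
    (hA : DependsOn (· ∈ A) (I : Set ι)) (hC : DependsOn (· ∈ C) (J : Set ι))
    (hIJ : Disjoint I J) :
    (#(A ∩ C) : ℝ) * 2 ^ Fintype.card ι = #A * #C := by
  have hind := iIndepFun_eval.indepFun_finset I J hIJ measurable_pi_apply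
  have h := congrArg ENNReal.toReal <| hind.measure_inter_preimage_eq_mul _ _
    (Set.toFinite ((fun (σ : ι → Bool) (i : I) => σ i) '' A)).measurableSet
    (Set.toFinite ((fun (σ : ι → Bool) (j : J) => σ j) '' C)).measurableSet
  rw [ENNReal.toReal_mul, ← measureReal_def, ← measureReal_def, ← measureReal_def,
    preimage_image_restrict_of_dependsOn hA, preimage_image_restrict_of_dependsOn hC, ← coe_inter,
    measureReal_uniformOn_univ, measureReal_uniformOn_univ, measureReal_uniformOn_univ] at h
  field_simp at h
  linear_combination h

lemma measureReal_rademacher_sum_ge_le (a : ι → ℝ) {m : ℝ≥0} (hm : ∑ i, a i ^ 2 ≤ m) {t : ℝ}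
    (ht : 0 ≤ t) :
    (uniformOn Set.univ).real {σ : ι → Bool | t ≤ ∑ i, a i * rademacher (σ i)}
      ≤ exp (-t ^ 2 / (2 * m)) := by
  have hindep :
      iIndepFun (fun i (σ : ι → Bool) => a i * rademacher (σ i)) (uniformOn Set.univ) := by
    rw [uniformOn_univ_eq_pi]
    exact iIndepFun_pi (X := fun i b => a i * rademacher b)
      fun i => (measurable_of_countable _).aemeasurable
  have hsub : ∀ i, HasSubgaussianMGF (fun σ : ι → Bool => a i * rademacher (σ i))
      (⟨a i ^ 2, sq_nonneg _⟩ * 1) (uniformOn Set.univ) := by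
    intro i
    rw [uniformOn_univ_eq_pi]
    refine HasSubgaussianMGF.of_map (Y := fun σ : ι → Bool => σ i)
      (X := fun b => a i * rademacher b) (measurable_pi_apply i).aemeasurable ?_
    rw [(measurePreserving_eval _ i).map_eq]
    exact hasSubgaussianMGF_rademacher.const_mul (a i)
  refine ((HasSubgaussianMGF.sum_of_iIndepFun hindep (s := univ) fun i _ => hsub i).mono ?_)
    |>.measure_ge_le ht
  rw [← NNReal.coe_le_coe, NNReal.coe_sum]
  convert hm using 2 with i
  exact mul_one _

lemma card_abs_rademacher_sum_ge_le (a : ι → ℝ) {m : ℝ≥0} (hm : ∑ i, a i ^ 2 ≤ m) {t : ℝ}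
    (ht : 0 ≤ t) :
    (#{σ : ι → Bool | t ≤ |∑ i, a i * rademacher (σ i)|} : ℝ)
      ≤ 2 * exp (-t ^ 2 / (2 * m)) * 2 ^ Fintype.card ι := by
  have hneg : ∑ i, (-a i) ^ 2 ≤ m := by simpa using hm
  rw [← div_le_iff₀ (by positivity), ← measureReal_uniformOn_univ, coe_filter]
  calc (uniformOn Set.univ).real {σ : ι → Bool | σ ∈ univ ∧ t ≤ |∑ i, a i * rademacher (σ i)|}
      ≤ (uniformOn Set.univ).real ({σ : ι → Bool | t ≤ ∑ i, a i * rademacher (σ i)}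
          ∪ {σ | t ≤ ∑ i, -a i * rademacher (σ i)}) := by
        refine measureReal_mono fun σ ⟨_, h⟩ => ?_
        simp only [neg_mul, sum_neg_distrib, Set.mem_union, Set.mem_ofPred_eq]
        exact (le_abs'.1 h).symm.imp_right le_neg_of_le_neg
    _ ≤ _ := measureReal_union_le _ _
    _ ≤ 2 * exp (-t ^ 2 / (2 * m)) := by
        linarith [measureReal_rademacher_sum_ge_le a hm ht,
          measureReal_rademacher_sum_ge_le _ hneg ht]

end BooleanCube

section LovaszLocalLemma

variable {ι κ : Type*} [Fintype ι] (B : κ → Finset (ι → Bool))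

noncomputable def avoiding (S : Finset κ) : Finset (ι → Bool) := univ \ S.biUnion B

lemma dependsOn_avoiding {vbl : κ → Finset ι} (hB : ∀ k, DependsOn (· ∈ B k) (vbl k : Set ι))
    (S : Finset κ) : DependsOn (· ∈ avoiding B S) (S.biUnion vbl : Set ι) := by
  intro σ τ hστ
  simp only [avoiding, mem_sdiff, mem_univ, true_and, mem_biUnion, not_exists, not_and,
    eq_iff_iff]
  refine forall₂_congr fun j hj => not_congr (iff_of_eq (hB j fun i hi => hστ i ?_))
  simp only [coe_biUnion, Set.mem_iUnion, mem_coe]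
  exact ⟨j, hj, hi⟩

variable [Fintype κ] {B} {vbl : κ → Finset ι} {D : ℕ} {p : ℝ}

theorem card_inter_avoiding_le (hB : ∀ k, DependsOn (· ∈ B k) (vbl k : Set ι))
    (hD : ∀ k, #{j | ¬Disjoint (vbl j) (vbl k)} ≤ D)
    (hp : ∀ k, (#(B k) : ℝ) ≤ p * 2 ^ Fintype.card ι) (hpD : 4 * p * D ≤ 1)
    (S : Finset κ) (k : κ) : (#(B k ∩ avoiding B S) : ℝ) ≤ 2 * p * #(avoiding B S) := by
  induction S using Finset.strongInduction generalizing k with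
  | H S ih =>
  -- `B k` is independent of avoiding the events `S₂` that share no variable with it, and
  -- avoiding the at most `D` remaining events `S₁` costs at most half, by induction.
  set S₁ := S.filter fun j => ¬Disjoint (vbl j) (vbl k)
  set S₂ := S.filter fun j => Disjoint (vbl j) (vbl k)
  have hp₀ : 0 ≤ p :=
    nonneg_of_mul_nonneg_left ((hp k).trans' (Nat.cast_nonneg _)) (by positivity)
  have hsplit : avoiding B S = avoiding B S₂ \ S₁.biUnion B := by
    rw [avoiding, avoiding, sdiff_sdiff_left, sup_eq_union, ← union_biUnion,
      filter_union_filter_not_eq]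
  have hnum : (#(B k ∩ avoiding B S) : ℝ) ≤ p * #(avoiding B S₂) := by
    have hdisj : Disjoint (vbl k) (S₂.biUnion vbl) := by
      simp only [disjoint_biUnion_right, S₂, mem_filter]
      exact fun j hj => hj.2.symm
    have hind := card_inter_mul_eq_of_dependsOn (hB k) (dependsOn_avoiding B hB S₂) hdisj
    have hmono : #(B k ∩ avoiding B S) ≤ #(B k ∩ avoiding B S₂) :=
      card_le_card (inter_subset_inter_left (hsplit ▸ sdiff_subset))
    have h2 : (0 : ℝ) < 2 ^ Fintype.card ι := by positivity
    refine (Nat.cast_le.2 hmono).trans (le_of_mul_le_mul_right ?_ h2)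
    rw [hind]
    nlinarith [hp k, (Nat.cast_nonneg _ : (0 : ℝ) ≤ #(avoiding B S₂))]
  have hden : (#(avoiding B S₂) : ℝ) ≤ 2 * #(avoiding B S) := by
    have hcover : avoiding B S₂ ⊆ avoiding B S ∪ S₁.biUnion fun j => B j ∩ avoiding B S₂ := by
      intro σ hσ
      by_cases h : σ ∈ avoiding B S
      · exact mem_union_left _ h
      · rw [hsplit, mem_sdiff, not_and_not_right] at h
        obtain ⟨j, hj, hσj⟩ := mem_biUnion.1 (h hσ)
        exact mem_union_right _ (mem_biUnion.2 ⟨j, hj, mem_inter.2 ⟨hσj, hσ⟩⟩)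
    have hterm : ∀ j ∈ S₁, (#(B j ∩ avoiding B S₂) : ℝ) ≤ 2 * p * #(avoiding B S₂) := by
      intro j hj
      have hjS₂ : j ∉ S₂ := fun h => (mem_filter.1 hj).2 (mem_filter.1 h).2
      exact ih S₂ ((ssubset_iff_of_subset (filter_subset _ _)).2 ⟨j, (mem_filter.1 hj).1, hjS₂⟩) j
    have hS₁ : (#S₁ : ℝ) ≤ D := by
      refine Nat.cast_le.2 ((card_le_card fun j hj => ?_).trans (hD k))
      simpa using (mem_filter.1 hj).2
    have hsum : (#(avoiding B S₂) : ℝ)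
        ≤ #(avoiding B S) + ∑ j ∈ S₁, (#(B j ∩ avoiding B S₂) : ℝ) := by
      exact_mod_cast (card_le_card hcover).trans
        ((card_union_le _ _).trans (Nat.add_le_add_left card_biUnion_le _))
    grw [sum_le_card_nsmul _ _ _ hterm, nsmul_eq_mul] at hsum
    have hpS₁ : (#S₁ : ℝ) * (2 * p) ≤ 1 / 2 := by nlinarith
    nlinarith [(Nat.cast_nonneg _ : (0 : ℝ) ≤ #(avoiding B S₂))]
  nlinarith

theorem exists_forall_notMem_of_lovasz (hB : ∀ k, DependsOn (· ∈ B k) (vbl k : Set ι))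
    (hD : ∀ k, #{j | ¬Disjoint (vbl j) (vbl k)} ≤ D) (hD₁ : 1 ≤ D)
    (hp : ∀ k, (#(B k) : ℝ) ≤ p * 2 ^ Fintype.card ι) (hpD : 4 * p * D ≤ 1) :
    ∃ σ : ι → Bool, ∀ k, σ ∉ B k := by
  have hp₁ : 2 * p < 1 := by
    have : (1 : ℝ) ≤ D := by exact_mod_cast hD₁
    nlinarith
  have hpos : ∀ S : Finset κ, 0 < #(avoiding B S) := by
    intro S
    induction S using Finset.induction_on with
    | empty => simp [avoiding]
    | insert k S _ ih =>
      have hlt : #(B k ∩ avoiding B S) < #(avoiding B S) := by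
        have h := card_inter_avoiding_le hB hD hp hpD S k
        have h' : (0 : ℝ) < #(avoiding B S) := by exact_mod_cast ih
        exact_mod_cast h.trans_lt (by nlinarith : 2 * p * #(avoiding B S) < #(avoiding B S))
      have heq : avoiding B (insert k S) = avoiding B S \ B k := by
        rw [avoiding, avoiding, biUnion_insert, union_comm, sdiff_sdiff_left, sup_eq_union]
      rw [heq, card_sdiff]
      omega
  obtain ⟨σ, hσ⟩ := card_pos.1 (hpos univ)
  exact ⟨σ, fun k hk => (mem_sdiff.1 hσ).2 (mem_biUnion.2 ⟨k, mem_univ k, hk⟩)⟩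

end LovaszLocalLemma

lemma IsReg.card_neighborFinset [Fintype V] {G : SimpleGraph V} {d : ℕ} (hreg : IsReg G d)
    (v : V) : #(G.neighborFinset v) = d := by
  rw [← hreg v, degN, Set.ncard_eq_toFinset_card']
  rfl

lemma degN_induce_le [Fintype V] (G : SimpleGraph V) (U : Set V) (x : U) :
    degN (G.induce U) x ≤ #{u ∈ G.neighborFinset x | u ∈ U} := by
  rw [degN, ← Set.ncard_image_of_injective _ Subtype.val_injective, ← Set.ncard_coe_finset]
  refine Set.ncard_le_ncard ?_ (finite_toSet _)
  rintro _ ⟨y, hy, rfl⟩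
  simpa using hy

lemma maxDeg_le_of_forall_degN_le {H : SimpleGraph V} {B : ℝ} (hB : 0 ≤ B)
    (h : ∀ x, (degN H x : ℝ) ≤ B) : (maxDeg H : ℝ) ≤ B := by
  refine (Nat.cast_le.2 (csSup_le' ?_)).trans (Nat.floor_le hB)
  rintro _ ⟨x, rfl⟩
  exact Nat.le_floor (h x)

section PairedBipartition

variable {ι : Type*} (e : V ≃ ι × Bool)

/-- Each pair `e.symm (i, ·)` is split between the two sides, `σ i` deciding which way. -/
def pairSide (σ : ι → Bool) (u : V) : Bool := xor (σ (e u).1) (e u).2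

lemma pairSide_symm (σ : ι → Bool) (i : ι) (b : Bool) :
    pairSide e σ (e.symm (i, b)) = xor (σ i) b := by
  simp [pairSide]

variable [Fintype V]

noncomputable def trueSide (σ : ι → Bool) : Finset V := {u | pairSide e σ u = true}

lemma mem_trueSide {σ : ι → Bool} {u : V} : u ∈ trueSide e σ ↔ pairSide e σ u = true := by
  simp [trueSide]

variable (G : SimpleGraph V)

noncomputable def sameSideDeg (σ : ι → Bool) (v : V) : ℕ :=
  #{u ∈ G.neighborFinset v | pairSide e σ u = pairSide e σ v}

noncomputable def pairWeight (v : V) (i : ι) : ℝ :=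
  (if e.symm (i, true) ∈ G.neighborFinset v then 1 else 0)
    - (if e.symm (i, false) ∈ G.neighborFinset v then 1 else 0)

noncomputable def pairSupport (v : V) : Finset ι := (G.neighborFinset v).image fun u => (e u).1

lemma pairWeight_eq_zero {v : V} {i : ι} (hi : i ∉ pairSupport e G v) :
    pairWeight e G v i = 0 := by
  have h : ∀ b, e.symm (i, b) ∉ G.neighborFinset v := fun b hb =>
    hi (mem_image.2 ⟨_, hb, by simp⟩)
  simp [pairWeight, h]

variable (σ : ι → Bool) {w : V}

lemma card_neighbor_mem_insert_le_of_pairSide_true {x : V} (hx : pairSide e σ x = true) :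
    #{u ∈ G.neighborFinset x | u ∈ insert w (trueSide e σ)} ≤ sameSideDeg e G σ x + 1 := by
  refine (card_le_card fun u hu => ?_).trans (card_insert_le w _)
  obtain ⟨hux, huU⟩ := mem_filter.1 hu
  rcases mem_insert.1 huU with rfl | huA
  · exact mem_insert_self _ _
  · exact mem_insert_of_mem (mem_filter.2 ⟨hux, by rw [hx, (mem_trueSide e).1 huA]⟩)

lemma card_neighbor_mem_insert_add_sameSideDeg_le (hw : pairSide e σ w = false) :
    #{u ∈ G.neighborFinset w | u ∈ insert w (trueSide e σ)} + sameSideDeg e G σ w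
      ≤ #(G.neighborFinset w) := by
  rw [← card_filter_add_card_filter_not (s := G.neighborFinset w)
    (fun u => pairSide e σ u = pairSide e σ w), add_comm]
  refine Nat.add_le_add_left (card_le_card fun u hu => ?_) _
  obtain ⟨huw, huU⟩ := mem_filter.1 hu
  rcases mem_insert.1 huU with rfl | huA
  · simp at huw
  · exact mem_filter.2 ⟨huw, by rw [hw, (mem_trueSide e).1 huA]; decide⟩

variable {G} {d : ℕ}

lemma card_pairSupport_le (hreg : IsReg G d) (v : V) : #(pairSupport e G v) ≤ d :=
  hreg.card_neighborFinset v ▸ card_image_le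

lemma card_not_disjoint_pairSupport_le (hreg : IsReg G d) (v : V) :
    #{w | ¬Disjoint (pairSupport e G w) (pairSupport e G v)} ≤ 2 * d ^ 2 := by
  have hsub : ({w | ¬Disjoint (pairSupport e G w) (pairSupport e G v)} : Finset V)
      ⊆ (pairSupport e G v).biUnion fun i =>
          G.neighborFinset (e.symm (i, true)) ∪ G.neighborFinset (e.symm (i, false)) := by
    intro w hw
    obtain ⟨i, hiw, hiv⟩ := not_disjoint_iff.1 (mem_filter.1 hw).2
    obtain ⟨u, hu, rfl⟩ := mem_image.1 hiw
    refine mem_biUnion.2 ⟨_, hiv, ?_⟩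
    have hwu : w ∈ G.neighborFinset u := by simpa [adj_comm] using hu
    rw [mem_union]
    cases h : (e u).2 <;> [right; left] <;> rwa [← h, Prod.mk.eta, Equiv.symm_apply_apply]
  refine (card_le_card hsub).trans ((card_biUnion_le_card_mul _ _ (2 * d) fun i _ => ?_).trans ?_)
  · refine (card_union_le _ _).trans ?_
    rw [hreg.card_neighborFinset, hreg.card_neighborFinset, two_mul]
  · nlinarith [card_pairSupport_le e hreg v]

variable (G) [Fintype ι]

lemma sum_eq_sum_pairs {M : Type*} [AddCommMonoid M] (f : V → M) :
    ∑ u, f u = ∑ i, (f (e.symm (i, true)) + f (e.symm (i, false))) := by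
  simp_rw [← e.symm.sum_comp f, Fintype.sum_prod_type, Fintype.sum_bool]

lemma card_trueSide : #(trueSide e σ) = Fintype.card ι := by
  rw [trueSide, card_filter, sum_eq_sum_pairs e, ← card_univ, card_eq_sum_ones]
  refine sum_congr rfl fun i _ => ?_
  simp only [pairSide_symm]
  cases σ i <;> rfl

lemma two_mul_sameSideDeg_sub_card (v : V) :
    2 * (sameSideDeg e G σ v : ℝ) - #(G.neighborFinset v)
      = -rademacher (pairSide e σ v) * ∑ i, pairWeight e G v i * rademacher (σ i) := by
  set N := G.neighborFinset v
  calc 2 * (sameSideDeg e G σ v : ℝ) - #N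
      = ∑ u, if u ∈ N then rademacher (pairSide e σ u) * rademacher (pairSide e σ v) else 0 := by
        rw [sum_ite_mem, univ_inter, sameSideDeg, natCast_card_filter, card_eq_sum_ones,
          Nat.cast_sum, mul_sum, ← sum_sub_distrib]
        refine sum_congr rfl fun u _ => ?_
        rw [rademacher_mul_rademacher]
        split_ifs <;> norm_num
    _ = _ := by
        rw [sum_eq_sum_pairs e, mul_sum]
        refine sum_congr rfl fun i _ => ?_
        simp only [pairSide_symm, pairWeight, Bool.xor_true, Bool.xor_false, rademacher_not]
        split_ifs <;> ring

lemma sum_pairWeight_sq_le (v : V) : ∑ i, pairWeight e G v i ^ 2 ≤ #(G.neighborFinset v) := by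
  rw [card_eq_sum_ones, Nat.cast_sum, ← univ_inter (G.neighborFinset v), ← sum_ite_mem,
    sum_eq_sum_pairs e]
  refine sum_le_sum fun i _ => ?_
  simp only [pairWeight]
  split_ifs <;> norm_num

noncomputable def imbalance (t : ℝ) (v : V) : Finset (ι → Bool) :=
  {σ | t ≤ |∑ i, pairWeight e G v i * rademacher (σ i)|}

lemma dependsOn_imbalance (t : ℝ) (v : V) :
    DependsOn (· ∈ imbalance e G t v) (pairSupport e G v : Set ι) := by
  intro σ τ hστ
  suffices ∑ i, pairWeight e G v i * rademacher (σ i)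
      = ∑ i, pairWeight e G v i * rademacher (τ i) by
    simp [imbalance, this]
  refine sum_congr rfl fun i _ => ?_
  by_cases hi : i ∈ pairSupport e G v
  · rw [hστ i hi]
  · simp [pairWeight_eq_zero e G hi]

variable {G}

lemma card_imbalance_le (hreg : IsReg G d) (hd : 1 ≤ d) (v : V) :
    (#(imbalance e G (4 * √(d * log d)) v) : ℝ) ≤ 2 / d ^ 8 * 2 ^ Fintype.card ι := by
  have hd₀ : (0 : ℝ) < d := by exact_mod_cast hd
  have hm : ∑ i, pairWeight e G v i ^ 2 ≤ ((d : ℝ≥0) : ℝ) := by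
    simpa [hreg.card_neighborFinset] using sum_pairWeight_sq_le e G v
  refine (card_abs_rademacher_sum_ge_le _ hm (by positivity)).trans_eq ?_
  have hexp : -(4 * √(d * log d)) ^ 2 / (2 * ((d : ℝ≥0) : ℝ)) = -log ((d : ℝ) ^ 8) := by
    rw [mul_pow, sq_sqrt (mul_nonneg hd₀.le (log_natCast_nonneg d)), log_pow,
      NNReal.coe_natCast]
    field_simp
    ring
  rw [hexp, exp_neg, exp_log (by positivity), div_eq_mul_inv]

theorem exists_forall_abs_two_mul_sameSideDeg_sub_lt (hreg : IsReg G d) (hd : 2 ≤ d) :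
    ∃ σ : ι → Bool, ∀ v, |2 * (sameSideDeg e G σ v : ℝ) - d| < 4 * √(d * log d) := by
  have hpD : 4 * (2 / (d : ℝ) ^ 8) * ((2 * d ^ 2 : ℕ) : ℝ) ≤ 1 := by
    have : (2 : ℝ) ^ 6 ≤ (d : ℝ) ^ 6 := by gcongr; exact_mod_cast hd
    push_cast
    rw [show 4 * (2 / (d : ℝ) ^ 8) * (2 * d ^ 2) = 16 / d ^ 6 by field_simp; ring,
      div_le_one (by positivity)]
    linarith
  obtain ⟨σ, hσ⟩ := exists_forall_notMem_of_lovasz (dependsOn_imbalance e G _)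
    (card_not_disjoint_pairSupport_le e hreg) (by nlinarith) (card_imbalance_le e hreg (by omega))
    hpD
  refine ⟨σ, fun v => ?_⟩
  have h := hσ v
  simp only [imbalance, mem_filter, mem_univ, true_and, not_le] at h
  calc |2 * (sameSideDeg e G σ v : ℝ) - d|
      = |2 * (sameSideDeg e G σ v : ℝ) - #(G.neighborFinset v)| := by
        rw [hreg.card_neighborFinset]
    _ = |∑ i, pairWeight e G v i * rademacher (σ i)| := by
        rw [two_mul_sameSideDeg_sub_card, abs_mul, abs_neg, abs_rademacher, one_mul]
    _ < _ := h

end PairedBipartition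

theorem exists_ncard_eq_maxDeg_induce_le [Fintype V] (G : SimpleGraph V) {n d : ℕ}
    (hV : Fintype.card V = 2 * n) (hn : 0 < n) (hd : 2 ≤ d) (hreg : IsReg G d) :
    ∃ U : Set V, U.ncard = n + 1 ∧ (maxDeg (G.induce U) : ℝ) ≤ d / 2 + 2 * √(d * log d) + 2 := by
  let e : V ≃ Fin n × Bool := Fintype.equivOfCardEq (by simp [hV, mul_comm])
  obtain ⟨σ, hσ⟩ := exists_forall_abs_two_mul_sameSideDeg_sub_lt e hreg hd
  have hA : #(trueSide e σ) = n := by simpa using card_trueSide e σ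
  obtain ⟨w, -, hw⟩ := exists_mem_notMem_of_card_lt_card (s := trueSide e σ) (t := univ)
    (by rw [hA, card_univ, hV]; omega)
  refine ⟨(insert w (trueSide e σ) : Finset V),
    by rw [Set.ncard_coe_finset, card_insert_of_notMem hw, hA], ?_⟩
  refine maxDeg_le_of_forall_degN_le (by positivity) fun ⟨x, hx⟩ =>
    (Nat.cast_le.2 (degN_induce_le G _ _)).trans ?_
  have hσx := abs_lt.1 (hσ x)
  simp only [mem_coe] at hx ⊢
  rcases mem_insert.1 hx with rfl | hxA
  · have h := card_neighbor_mem_insert_add_sameSideDeg_le e G σ (by simpa [mem_trueSide] using hw)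
    rw [hreg.card_neighborFinset] at h
    have h' : (#{u ∈ G.neighborFinset x | u ∈ insert x (trueSide e σ)} : ℝ)
        + sameSideDeg e G σ x ≤ d := by exact_mod_cast h
    linarith
  · have h : (#{u ∈ G.neighborFinset x | u ∈ insert w (trueSide e σ)} : ℝ)
        ≤ sameSideDeg e G σ x + 1 := by
      exact_mod_cast card_neighbor_mem_insert_le_of_pairSide_true e G σ ((mem_trueSide e).1 hxA)
    linarith

/-- there is d₀ > 0 such that every d-regular graph on 2n vertices with
d₀ ≤ d ≤ 2n-1 has a set U of n+1 vertices inducing a subgraph of maximum degree at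
most d/2 + 2√(d ln d) + 2. -/
theorem stmt7 :
    ∃ d₀ : ℕ, 0 < d₀ ∧
      ∀ (V : Type) [Fintype V], ∀ (n d : ℕ) (G : SimpleGraph V),
        Fintype.card V = 2 * n → d₀ ≤ d → d ≤ 2 * n - 1 → IsReg G d →
        ∃ U : Set V, U.ncard = n + 1 ∧
          (maxDeg (G.induce U) : ℝ) ≤ (d : ℝ) / 2 + 2 * Real.sqrt (d * Real.log d) + 2 :=
  ⟨2, two_pos, fun _ _ _ _ G hV hd hdn hreg =>
    exists_ncard_eq_maxDeg_induce_le G hV (by omega) hd hreg⟩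
end

section
/- For any positive integer k and any graph G on n vertices with minimum degree δ(G) ≥ 4k, in the Maker-Breaker game played on the edges of G (Breaker moving first, players alternately claiming previously unclaimed edges), Maker has a strategy to build a spanning subgraph of minimum degree at least k using at most kn moves. -/
open SimpleGraph Real
open scoped Classical

variable {V : Type*}

/-!
By Hall's theorem, since every degree is at least `4k` and an edge meets only two vertices, one
can give each vertex `v` a private box of `2k` edges at `v`, the boxes pairwise disjoint. Maker
then plays the box game: he keeps, in every box where he holds fewer than `k` edges, at least as
many edges as Breaker. A Breaker move touches one box, so Maker can restore this balance, and an
unfinished balanced box has fewer than `2k` claimed edges, hence a free one. Thus, while some box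
is unfinished, every Maker move raises `∑ v, min (Maker's edges in box v) k`, which is at most
`kn`, with equality exactly when every box holds `k` of Maker's edges.
-/

open Finset Function

lemma Finset.card_inter_insert_le {α : Type*} [DecidableEq α] (s t : Finset α) (a : α) :
    #(s ∩ insert a t) ≤ #(s ∩ t) + 1 := by
  by_cases ha : a ∈ s
  · rw [inter_insert_of_mem ha]
    exact card_insert_le _ _
  · rw [inter_insert_of_notMem ha]
    omega

lemma Finset.exists_mem_notMem_of_card_inter_add_lt {α : Type*} [DecidableEq α]
    {s X Y : Finset α} (h : #(s ∩ X) + #(s ∩ Y) < #s) : ∃ e ∈ s, e ∉ X ∧ e ∉ Y := by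
  by_contra! hcov
  have : s ⊆ s ∩ X ∪ s ∩ Y := fun e he => by
    by_cases heX : e ∈ X <;> simp [he, heX, hcov e he]
  have := (card_le_card this).trans (card_union_le _ _)
  omega

lemma Sym2.card_toFinset_le_two {α : Type*} [DecidableEq α] (z : Sym2 α) :
    #z.toFinset ≤ 2 := by
  induction z using Sym2.ind with
  | _ a b => rw [Sym2.toFinset_mk_eq]; exact card_le_two

lemma Sym2.card_le_ncard_of_forall_mem {α : Type*} [Finite α] {E X : Finset (Sym2 α)} {v : α}
    (hv : ∀ e ∈ E, v ∈ e) (hEX : E ⊆ X) : #E ≤ {w | s(v, w) ∈ X}.ncard := by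
  have hsub : (E : Set (Sym2 α)) ⊆ (fun w => s(v, w)) '' {w | s(v, w) ∈ X} := by
    intro e he
    obtain ⟨w, rfl⟩ := Sym2.mem_iff_exists.1 (hv e he)
    exact ⟨w, hEX he, rfl⟩
  calc #E = (E : Set (Sym2 α)).ncard := (Set.ncard_coe_finset E).symm
    _ ≤ ((fun w => s(v, w)) '' {w | s(v, w) ∈ X}).ncard := Set.ncard_le_ncard hsub
    _ ≤ {w | s(v, w) ∈ X}.ncard := Set.ncard_image_le (Set.toFinite _)

instance Sym2.instNonempty {α : Type*} [Nonempty α] : Nonempty (Sym2 α) :=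
  .map (fun a => s(a, a)) ‹_›

namespace BoxGame

variable {ι : Type*} [DecidableEq V] (b : ι → Finset (Sym2 V)) (k : ℕ)

/-- A position of the game: Maker's edges, then Breaker's edges. -/
abbrev Position (V : Type*) := Finset (Sym2 V) × Finset (Sym2 V)

def IsFree (s : Position V) (e : Sym2 V) : Prop := e ∉ s.1 ∧ e ∉ s.2

def Balanced (s : Position V) : Prop :=
  ∀ i, #(b i ∩ s.2) ≤ #(b i ∩ s.1) ∨ k ≤ #(b i ∩ s.1)

def UsefulMove (s : Position V) (e : Sym2 V) : Prop :=
  IsFree s e ∧ ∃ i, e ∈ b i ∧ #(b i ∩ s.1) < k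

def UrgentMove (s : Position V) (e : Sym2 V) : Prop :=
  IsFree s e ∧ ∃ i, e ∈ b i ∧ #(b i ∩ s.1) < k ∧ #(b i ∩ s.1) < #(b i ∩ s.2)

noncomputable def strategy [Nonempty V] (G : SimpleGraph V) (s : Position V) : Sym2 V :=
  if ∃ e, UrgentMove b k s e then Classical.epsilon (UrgentMove b k s)
  else if ∃ e, UsefulMove b k s e then Classical.epsilon (UsefulMove b k s)
  else Classical.epsilon fun e => e ∈ G.edgeSet ∧ IsFree s e

variable {b k} {M B : Finset (Sym2 V)} {t : Sym2 V}

lemma strategy_urgentMove [Nonempty V] {G : SimpleGraph V} {s : Position V}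
    (h : ∃ e, UrgentMove b k s e) : UrgentMove b k s (strategy b k G s) := by
  rw [strategy, if_pos h]
  exact Classical.epsilon_spec h

lemma strategy_usefulMove [Nonempty V] {G : SimpleGraph V} {s : Position V}
    (h : ∃ e, UsefulMove b k s e) : UsefulMove b k s (strategy b k G s) := by
  by_cases hu : ∃ e, UrgentMove b k s e
  · obtain ⟨hfree, i, hi, hlt, -⟩ := strategy_urgentMove (G := G) hu
    exact ⟨hfree, i, hi, hlt⟩
  · rw [strategy, if_neg hu, if_pos h]
    exact Classical.epsilon_spec h

lemma strategy_legal [Fintype V] [Nonempty V] {G : SimpleGraph V}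
    (hbG : ∀ i, (b i : Set (Sym2 V)) ⊆ G.edgeSet) : LegalStrategy G (strategy b k G) := by
  intro s hs
  by_cases hu : ∃ e, UsefulMove b k s e
  · obtain ⟨hfree, i, hi, -⟩ := strategy_usefulMove (G := G) hu
    exact ⟨hbG i hi, hfree⟩
  · have hu' : ¬∃ e, UrgentMove b k s e := fun ⟨e, hfree, i, hi, hlt, _⟩ =>
      hu ⟨e, hfree, i, hi, hlt⟩
    rw [strategy, if_neg hu', if_neg hu]
    exact Classical.epsilon_spec (p := fun e => e ∈ G.edgeSet ∧ IsFree s e) hs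

lemma Balanced.mem_of_lt (hbal : Balanced b k (M, B)) {i : ι} (hi : #(b i ∩ M) < k)
    (hlt : #(b i ∩ M) < #(b i ∩ insert t B)) :
    t ∈ b i ∧ #(b i ∩ insert t B) = #(b i ∩ M) + 1 := by
  have hB : #(b i ∩ B) ≤ #(b i ∩ M) := (hbal i).resolve_right (by simpa using hi)
  have := card_inter_insert_le (b i) B t
  refine ⟨by_contra fun ht => ?_, by omega⟩
  rw [inter_insert_of_notMem ht] at hlt
  omega

lemma Balanced.exists_isFree (hbal : Balanced b k (M, B)) (hbox : ∀ i, 2 * k ≤ #(b i)) {i : ι}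
    (hi : #(b i ∩ M) < k) :
    ∃ e ∈ b i, IsFree (M, insert t B) e := by
  have hB : #(b i ∩ B) ≤ #(b i ∩ M) := (hbal i).resolve_right (by simpa using hi)
  have := card_inter_insert_le (b i) B t
  exact exists_mem_notMem_of_card_inter_add_lt (by linarith [hbox i])

lemma Balanced.strategy_step [Nonempty V] {G : SimpleGraph V} (hbal : Balanced b k (M, B))
    (hbox : ∀ i, 2 * k ≤ #(b i)) (hdisj : Pairwise (Disjoint on b)) :
    Balanced b k (insert (strategy b k G (M, insert t B)) M, insert t B) := by
  set e := strategy b k G (M, insert t B)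
  have hmono : ∀ i, #(b i ∩ M) ≤ #(b i ∩ insert e M) := fun i =>
    card_le_card (inter_subset_inter_left (subset_insert e M))
  intro i
  dsimp only
  by_cases hdone : k ≤ #(b i ∩ M)
  · exact Or.inr (hdone.trans (hmono i))
  by_cases hahead : #(b i ∩ insert t B) ≤ #(b i ∩ M)
  · exact Or.inl (hahead.trans (hmono i))
  push Not at hdone hahead
  obtain ⟨ht, hcount⟩ := hbal.mem_of_lt hdone hahead
  obtain ⟨f, hf, hfree⟩ := hbal.exists_isFree hbox hdone
  obtain ⟨⟨heM, -⟩, j, hej, hj, hjlt⟩ :=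
    strategy_urgentMove (G := G) ⟨f, hfree, i, hf, hdone, hahead⟩
  dsimp only at heM hj hjlt
  -- Breaker's last edge lies in every box where he is now ahead, so there is only one such box.
  obtain rfl : j = i :=
    hdisj.eq (not_disjoint_iff.2 ⟨t, (hbal.mem_of_lt hj hjlt).1, ht⟩)
  left
  rw [inter_insert_of_mem hej, card_insert_of_notMem fun h => heM (mem_inter.1 h).2]
  omega

section Potential

variable [Fintype ι]

variable (b k) in
def potential (M : Finset (Sym2 V)) : ℕ := ∑ i, min #(b i ∩ M) k

lemma potential_mono {M' : Finset (Sym2 V)} (h : M ⊆ M') :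
    potential b k M ≤ potential b k M' :=
  sum_le_sum fun _ _ => min_le_min_right k (card_le_card (inter_subset_inter_left h))

lemma potential_le : potential b k M ≤ k * Fintype.card ι := by
  calc potential b k M ≤ ∑ _ : ι, k := sum_le_sum fun _ _ => min_le_right _ _
    _ = k * Fintype.card ι := by simp [mul_comm]

lemma potential_eq_iff :
    potential b k M = k * Fintype.card ι ↔ ∀ i, k ≤ #(b i ∩ M) := by
  have : k * Fintype.card ι = ∑ _ : ι, k := by simp [mul_comm]
  rw [this, potential, sum_eq_sum_iff_of_le fun i _ => min_le_right _ _]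
  simp

lemma Balanced.potential_lt_strategy_step [Nonempty V] {G : SimpleGraph V}
    (hbal : Balanced b k (M, B))
    (hbox : ∀ i, 2 * k ≤ #(b i)) {i : ι} (hi : #(b i ∩ M) < k) :
    potential b k M < potential b k (insert (strategy b k G (M, insert t B)) M) := by
  obtain ⟨f, hf, hfree⟩ := hbal.exists_isFree (t := t) hbox hi
  obtain ⟨⟨heM, -⟩, j, hej, hj⟩ := strategy_usefulMove (G := G) ⟨f, hfree, i, hf, hi⟩
  dsimp only at heM hj
  refine sum_lt_sum (fun l _ => min_le_min_right k
    (card_le_card (inter_subset_inter_left (subset_insert _ _)))) ⟨j, mem_univ j, ?_⟩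
  rw [inter_insert_of_mem hej, card_insert_of_notMem fun h => heM (mem_inter.1 h).2]
  omega

lemma strategy_invariant [Nonempty V] {G : SimpleGraph V} (hbox : ∀ i, 2 * k ≤ #(b i))
    (hdisj : Pairwise (Disjoint on b)) (τ : Position V → Sym2 V) (n : ℕ) :
    Balanced b k (playMB (strategy b k G) τ n) ∧
      min n (k * Fintype.card ι) ≤ potential b k (playMB (strategy b k G) τ n).1 := by
  induction n with
  | zero => exact ⟨fun i => Or.inl (by simp [playMB]), by simp⟩
  | succ n ih =>
    simp only [playMB]
    generalize playMB (strategy b k G) τ n = p at ih ⊢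
    obtain ⟨M, B⟩ := p
    obtain ⟨hbal, hpot⟩ := ih
    dsimp only at hpot ⊢
    refine ⟨hbal.strategy_step hbox hdisj, ?_⟩
    have hmono := potential_mono (b := b) (k := k)
      (subset_insert (strategy b k G (M, insert (τ (M, B)) B)) M)
    by_cases hdone : ∀ i, k ≤ #(b i ∩ M)
    · rw [potential_eq_iff.2 hdone] at hmono
      exact (min_le_right _ _).trans hmono
    · push Not at hdone
      obtain ⟨i, hi⟩ := hdone
      have := hbal.potential_lt_strategy_step (G := G) (t := τ (M, B)) hbox hi
      omega

theorem strategy_wins [Nonempty V] {G : SimpleGraph V} (hbox : ∀ i, 2 * k ≤ #(b i))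
    (hdisj : Pairwise (Disjoint on b)) (τ : Position V → Sym2 V) (i : ι) :
    k ≤ #(b i ∩ (playMB (strategy b k G) τ (k * Fintype.card ι)).1) := by
  have := (strategy_invariant (G := G) hbox hdisj τ (k * Fintype.card ι)).2
  rw [min_self] at this
  exact potential_eq_iff.1 (le_antisymm potential_le this) i

end Potential

end BoxGame

namespace SimpleGraph

variable [Fintype V] [DecidableEq V]

lemma card_mul_two_le_card_biUnion_incidenceFinset (G : SimpleGraph V) [DecidableRel G.Adj]
    {m : ℕ} (h : ∀ v, m ≤ G.degree v) (S : Finset V) :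
    #S * m ≤ #(S.biUnion fun v => G.incidenceFinset v) * 2 := by
  refine card_mul_le_card_mul (fun v e => e ∈ G.incidenceFinset v) (fun v hv => ?_) fun e _ => ?_
  · refine ((h v).trans_eq (G.card_incidenceFinset_eq_degree v).symm).trans
      (card_le_card fun e he => ?_)
    exact mem_filter.2 ⟨mem_biUnion.2 ⟨v, hv, he⟩, he⟩
  · refine (card_le_card fun w hw => ?_).trans e.card_toFinset_le_two
    exact Sym2.mem_toFinset.2 ((G.mem_incidenceFinset w e).1 (mem_filter.1 hw).2).2

lemma exists_pairwise_disjoint_subset_incidenceFinset (G : SimpleGraph V) [DecidableRel G.Adj]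
    (m : ℕ) (h : ∀ v, 2 * m ≤ G.degree v) :
    ∃ b : V → Finset (Sym2 V),
      Pairwise (Disjoint on b) ∧ ∀ v, #(b v) = m ∧ b v ⊆ G.incidenceFinset v := by
  have hall (s : Finset (V × Fin m)) : #s ≤ #(s.biUnion fun p => G.incidenceFinset p.1) := by
    have hs : #s ≤ #(s.image Prod.fst) * m := by
      calc #s ≤ #(s.image Prod.fst ×ˢ (univ : Finset (Fin m))) :=
            card_le_card fun p hp => mem_product.2 ⟨mem_image_of_mem _ hp, mem_univ _⟩
        _ = #(s.image Prod.fst) * m := by simp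
    have := G.card_mul_two_le_card_biUnion_incidenceFinset h (s.image Prod.fst)
    rw [image_biUnion] at this
    nlinarith
  obtain ⟨f, hf, hfG⟩ := (all_card_le_biUnion_card_iff_exists_injective _).1 hall
  refine ⟨fun v => univ.image fun j => f (v, j), fun v w hvw => ?_, fun v => ⟨?_, ?_⟩⟩
  · refine Finset.disjoint_left.2 ?_
    simp only [mem_image, mem_univ, true_and]
    rintro _ ⟨i, rfl⟩ ⟨j, hj⟩
    exact hvw (congrArg Prod.fst (hf hj)).symm
  · rw [card_image_of_injective _ fun i j hij => by simpa using hf hij, card_univ,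
      Fintype.card_fin]
  · exact image_subset_iff.2 fun j _ => hfG (v, j)

end SimpleGraph

lemma minDeg_le_degree [Fintype V] (G : SimpleGraph V) [DecidableRel G.Adj] (v : V) :
    minDeg G ≤ G.degree v :=
  calc minDeg G ≤ degN G v := Nat.sInf_le ⟨v, rfl⟩
    _ = G.degree v := by
      rw [degN, ← Nat.card_coe_set_eq, Nat.card_eq_fintype_card, G.card_neighborSet_eq_degree]

lemma nonempty_of_pos_minDeg (G : SimpleGraph V) (h : 0 < minDeg G) : Nonempty V := by
  by_contra hV
  rw [not_nonempty_iff] at hV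
  simp [minDeg, Set.range_eq_empty] at h

/-- in the Maker-Breaker game on the edges of a graph G on n vertices with
δ(G) ≥ 4k (Breaker moving first), Maker has a legal strategy guaranteeing that after at
most kn of his moves, his graph has minimum degree at least k, against any legal Breaker
strategy. -/
theorem stmt19 {V : Type*} [Fintype V] [DecidableEq V] (G : SimpleGraph V) (k : ℕ)
    (hk : 0 < k) (hmin : 4 * k ≤ minDeg G) :
    ∃ σ : Finset (Sym2 V) × Finset (Sym2 V) → Sym2 V, LegalStrategy G σ ∧
      ∀ τ : Finset (Sym2 V) × Finset (Sym2 V) → Sym2 V, LegalStrategy G τ →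
        ∃ i ≤ k * Fintype.card V, ∀ v : V,
          k ≤ ({w : V | s(v, w) ∈ (playMB σ τ i).1} : Set V).ncard := by
  have := nonempty_of_pos_minDeg G (by omega)
  obtain ⟨b, hdisj, hb⟩ := G.exists_pairwise_disjoint_subset_incidenceFinset (2 * k)
    fun v => by have := minDeg_le_degree G v; omega
  have hinc (v : V) (e : Sym2 V) (he : e ∈ b v) : e ∈ G.edgeSet ∧ v ∈ e :=
    (G.mem_incidenceFinset v e).1 ((hb v).2 he)
  refine ⟨BoxGame.strategy b k G, BoxGame.strategy_legal fun v e he => (hinc v e he).1,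
    fun τ _ => ⟨k * Fintype.card V, le_rfl, fun v => ?_⟩⟩
  calc k ≤ #(b v ∩ (playMB (BoxGame.strategy b k G) τ (k * Fintype.card V)).1) :=
        BoxGame.strategy_wins (fun v => (hb v).1.ge) hdisj τ v
    _ ≤ _ := Sym2.card_le_ncard_of_forall_mem
        (fun e he => (hinc v e (mem_inter.1 he).1).2) inter_subset_right
end
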